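/- Fix d ≥ 1 and p ∈ (0,1), and let ν be a stationary RER on ℤ^d such that ν({π : x and 0 lie in the same block}) → 0 as |x| → ∞. Then ν is mixing if and only if the joint law P_{ν,p} of the partition together with its coloring is mixing; in particular, if ν is mixing then the color process Φ_p(ν) is mixing. (All mixing is with respect to the group of translations of ℤ^d.) -/

import Mathlib

open MeasureTheory
open scoped Classical BigOperators ENNReal

/-- The σ-algebra on the space of partitions of `V` (identified with equivalence relations,
i.e. setoids, on `V`) generated by the events "`v` and `w` lie in the same block". -/
instance setoidMeasurableSpace (V : Type*) : MeasurableSpace (Setoid V) :=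
  MeasurableSpace.generateFrom {A | ∃ v w : V, A = {π : Setoid V | π.r v w}}

/-- The probability that the color process of the deterministic partition `π`, with
parameter `p`, agrees with `b` on the finite set `F`: the product over the blocks of the
partition induced by `π` on `F` of `p·1[b ≡ 1 on B] + (1-p)·1[b ≡ 0 on B]`. -/
noncomputable def cylW {V : Type*} (p : ℝ) (F : Finset V) (π : Setoid V) (b : V → Bool) : ℝ :=
  ∏ᶠ B ∈ {S : Set V | ∃ v ∈ F, S = {w | w ∈ F ∧ π.r v w}},
    ((if ∀ i ∈ B, b i = true then p else 0) + (if ∀ i ∈ B, b i = false then 1 - p else 0))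

/-- The cylinder event "the configuration agrees with `b` on `F`". -/
def cylEvent {V : Type*} (F : Finset V) (b : V → Bool) : Set (V → Bool) :=
  {x | ∀ v ∈ F, x v = b v}

/-- `μ` is the color process `Φ_p(ν)` of the random equivalence relation `ν`, characterized
through its finite-dimensional distributions. -/
def IsColorProcess {V : Type*} (p : ℝ) (ν : Measure (Setoid V)) (μ : Measure (V → Bool)) :
    Prop :=
  IsProbabilityMeasure μ ∧
    ∀ (F : Finset V) (b : V → Bool),
      μ (cylEvent F b) = ENNReal.ofReal (∫ π, cylW p F π b ∂ν)

/-- `μ` is the Bernoulli(α) product measure `Π_α` on `{0,1}^V`, characterized through its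
finite-dimensional distributions. -/
def IsBernoulliProduct {V : Type*} (α : ℝ) (μ : Measure (V → Bool)) : Prop :=
  IsProbabilityMeasure μ ∧
    ∀ (F : Finset V) (b : V → Bool),
      μ (cylEvent F b) = ∏ v ∈ F, ENNReal.ofReal (if b v then α else 1 - α)

/-- Stochastic domination `μ₁ ≼ μ₂`: some coupling of `μ₁` and `μ₂` is concentrated on the
set of coordinatewise ordered pairs of configurations. -/
def StochDom {V : Type*} (μ₁ μ₂ : Measure (V → Bool)) : Prop :=
  ∃ κ : Measure ((V → Bool) × (V → Bool)),
    κ.map Prod.fst = μ₁ ∧ κ.map Prod.snd = μ₂ ∧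
      κ {q | ∀ v, q.1 v = true → q.2 v = true}ᶜ = 0

/-- The vertex set `ℤ^d`. -/
abbrev Vd (d : ℕ) := Fin d → ℤ

/-- The translation of a partition of `ℤ^d` by `x`. -/
def shiftSetoid {d : ℕ} (x : Vd d) (π : Setoid (Vd d)) : Setoid (Vd d) where
  r a b := π.r (a - x) (b - x)
  iseqv := ⟨fun _ => π.iseqv.refl _, fun h => π.iseqv.symm h, fun h h' => π.iseqv.trans h h'⟩

/-- The translation of a configuration `ω ∈ {0,1}^{ℤ^d}` by `x`: `(T^x ω)(y) = ω(y - x)`. -/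
def shiftCfg {d : ℕ} (x : Vd d) (ω : Vd d → Bool) : Vd d → Bool := fun y => ω (y - x)

/-- An RER on `ℤ^d` is stationary if it is invariant under all translations. -/
def StationaryRER {d : ℕ} (ν : Measure (Setoid (Vd d))) : Prop :=
  ∀ x : Vd d, Measure.map (shiftSetoid x) ν = ν

/-- The box `B_n = [-n,n]^d ∩ ℤ^d`. -/
def box (d n : ℕ) : Set (Vd d) := {v | ∀ i, |v i| ≤ (n : ℤ)}

/-- A translation-invariant RER on `ℤ^d` is ergodic if every measurable set of partitions
invariant under every translation has measure `0` or `1`. -/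
def ErgodicRER {d : ℕ} (ν : Measure (Setoid (Vd d))) : Prop :=
  ∀ A : Set (Setoid (Vd d)), MeasurableSet A → (∀ x : Vd d, shiftSetoid x ⁻¹' A = A) →
    ν A = 0 ∨ ν A = 1

/-- The diagonal translation action on pairs (partition, configuration). -/
def shiftPair {d : ℕ} (x : Vd d) (q : Setoid (Vd d) × (Vd d → Bool)) :
    Setoid (Vd d) × (Vd d → Bool) :=
  (shiftSetoid x q.1, shiftCfg x q.2)

/-- A translation-invariant measure on pairs (partition, configuration) is ergodic if every
measurable set invariant under every (diagonal) translation has measure `0` or `1`. -/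
def ErgodicJoint {d : ℕ} (Q : Measure (Setoid (Vd d) × (Vd d → Bool))) : Prop :=
  ∀ A : Set (Setoid (Vd d) × (Vd d → Bool)), MeasurableSet A →
    (∀ x : Vd d, shiftPair x ⁻¹' A = A) → Q A = 0 ∨ Q A = 1

/-- `Q` is the joint law `P_{ν,p}` of the partition together with its coloring,
characterized through the measures of rectangles built from measurable sets of partitions
and cylinder events of configurations. -/
def IsJointColor {d : ℕ} (p : ℝ) (ν : Measure (Setoid (Vd d)))
    (Q : Measure (Setoid (Vd d) × (Vd d → Bool))) : Prop :=
  IsProbabilityMeasure Q ∧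
    ∀ (A : Set (Setoid (Vd d))), MeasurableSet A → ∀ (F : Finset (Vd d)) (b : Vd d → Bool),
      Q (A ×ˢ cylEvent F b) = ENNReal.ofReal (∫ π in A, cylW p F π b ∂ν)

/-- A translation-invariant RER on `ℤ^d` is mixing if
`ν(A ∩ T^{-x}B) → ν(A)·ν(B)` as `|x| → ∞` (i.e. along the cofinite filter on `ℤ^d`). -/
def MixingRER {d : ℕ} (ν : Measure (Setoid (Vd d))) : Prop :=
  ∀ A B : Set (Setoid (Vd d)), MeasurableSet A → MeasurableSet B →
    Filter.Tendsto (fun x : Vd d => ν (A ∩ shiftSetoid x ⁻¹' B)) Filter.cofinite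
      (nhds (ν A * ν B))

/-- A translation-invariant measure on `{0,1}^{ℤ^d}` is mixing. -/
def MixingCfg {d : ℕ} (μ : Measure (Vd d → Bool)) : Prop :=
  ∀ A B : Set (Vd d → Bool), MeasurableSet A → MeasurableSet B →
    Filter.Tendsto (fun x : Vd d => μ (A ∩ shiftCfg x ⁻¹' B)) Filter.cofinite
      (nhds (μ A * μ B))

/-- A translation-invariant measure on pairs (partition, configuration) is mixing. -/
def MixingJoint {d : ℕ} (Q : Measure (Setoid (Vd d) × (Vd d → Bool))) : Prop :=
  ∀ A B : Set (Setoid (Vd d) × (Vd d → Bool)), MeasurableSet A → MeasurableSet B →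
    Filter.Tendsto (fun x : Vd d => Q (A ∩ shiftPair x ⁻¹' B)) Filter.cofinite
      (nhds (Q A * Q B))
section Aux
open MeasurableSpace Filter Set

variable {V : Type*} [DecidableEq V]

lemma measurableSet_rel (v w : V) : MeasurableSet {π : Setoid V | π.r v w} :=
  measurableSet_generateFrom ⟨v, w, rfl⟩

/-- blocks of the partition induced on `F`, as a finset of finsets. -/
noncomputable def blkF (F : Finset V) (π : Setoid V) : Finset (Finset V) :=
  F.image (fun v => F.filter (fun w => π.r v w))

/-- the factor of one block. -/
noncomputable def fac (p : ℝ) (b : V → Bool) (B : Finset V) : ℝ :=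
  (if ∀ i ∈ B, b i = true then p else 0) + (if ∀ i ∈ B, b i = false then 1 - p else 0)

lemma cylW_eq_prod (p : ℝ) (F : Finset V) (π : Setoid V) (b : V → Bool) :
    cylW p F π b = ∏ B ∈ blkF F π, fac p b B := by
  have hset : {S : Set V | ∃ v ∈ F, S = {w | w ∈ F ∧ π.r v w}}
      = (fun B : Finset V => (B : Set V)) '' (blkF F π : Set (Finset V)) := by
    ext S
    simp only [Set.mem_setOf_eq, Set.mem_image, Finset.mem_coe, blkF, Finset.mem_image]
    constructor
    · rintro ⟨v, hv, rfl⟩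
      exact ⟨F.filter (fun w => π.r v w), ⟨v, hv, rfl⟩, by ext w; simp [Finset.mem_filter]⟩
    · rintro ⟨B, ⟨v, hv, rfl⟩, rfl⟩
      exact ⟨v, hv, by ext w; simp [Finset.mem_filter]⟩
  rw [cylW, hset, finprod_mem_image (Finset.coe_injective.injOn),
    finprod_mem_coe_finset]
  refine Finset.prod_congr rfl fun B _ => ?_
  simp [fac, Finset.mem_coe]

end Aux
section Aux2
open MeasurableSpace Filter Set

variable {V : Type*} [DecidableEq V]

lemma fac_mem_Icc {p : ℝ} (hp : p ∈ Set.Icc (0:ℝ) 1) (b : V → Bool) {B : Finset V}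
    (hB : B.Nonempty) : fac p b B ∈ Set.Icc (0:ℝ) 1 := by
  obtain ⟨v, hv⟩ := hB
  rcases hp with ⟨h0, h1⟩
  unfold fac
  by_cases ht : ∀ i ∈ B, b i = true
  · have hf : ¬ ∀ i ∈ B, b i = false := fun hf => by simpa [ht v hv] using hf v hv
    rw [if_pos ht, if_neg hf]
    constructor <;> simp <;> linarith
  · by_cases hf : ∀ i ∈ B, b i = false
    · rw [if_neg ht, if_pos hf]
      constructor <;> simp <;> linarith
    · rw [if_neg ht, if_neg hf]; simp

lemma blkF_nonempty {F : Finset V} {π : Setoid V} {B : Finset V} (hB : B ∈ blkF F π) :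
    B.Nonempty := by
  obtain ⟨v, hv, rfl⟩ := Finset.mem_image.mp hB
  exact ⟨v, Finset.mem_filter.mpr ⟨hv, π.iseqv.refl v⟩⟩

lemma blkF_subset {F : Finset V} {π : Setoid V} {B : Finset V} (hB : B ∈ blkF F π) :
    B ⊆ F := by
  obtain ⟨v, hv, rfl⟩ := Finset.mem_image.mp hB
  exact Finset.filter_subset _ _

lemma cylW_mem_Icc {p : ℝ} (hp : p ∈ Set.Icc (0:ℝ) 1) (F : Finset V) (π : Setoid V)
    (b : V → Bool) : cylW p F π b ∈ Set.Icc (0:ℝ) 1 := by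
  rw [cylW_eq_prod]
  refine ⟨Finset.prod_nonneg fun B hB => (fac_mem_Icc hp b (blkF_nonempty hB)).1, ?_⟩
  exact Finset.prod_le_one (fun B hB => (fac_mem_Icc hp b (blkF_nonempty hB)).1)
    (fun B hB => (fac_mem_Icc hp b (blkF_nonempty hB)).2)

lemma cylW_nonneg {p : ℝ} (hp : p ∈ Set.Icc (0:ℝ) 1) (F : Finset V) (π : Setoid V)
    (b : V → Bool) : 0 ≤ cylW p F π b := (cylW_mem_Icc hp F π b).1

lemma cylW_le_one {p : ℝ} (hp : p ∈ Set.Icc (0:ℝ) 1) (F : Finset V) (π : Setoid V)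
    (b : V → Bool) : cylW p F π b ≤ 1 := (cylW_mem_Icc hp F π b).2

lemma fac_congr {p : ℝ} {b b' : V → Bool} {B : Finset V} (h : ∀ i ∈ B, b i = b' i) :
    fac p b B = fac p b' B := by
  unfold fac
  congr 1 <;> [skip; skip] <;>
  · refine if_congr ?_ rfl rfl
    constructor <;> intro hh i hi <;> [rw [← h i hi]; rw [h i hi]] <;> exact hh i hi

lemma cylW_congr {p : ℝ} {F : Finset V} {π : Setoid V} {b b' : V → Bool}
    (h : ∀ i ∈ F, b i = b' i) : cylW p F π b = cylW p F π b' := by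
  rw [cylW_eq_prod, cylW_eq_prod]
  exact Finset.prod_congr rfl fun B hB => fac_congr fun i hi => h i (blkF_subset hB hi)

lemma blkF_union {F G : Finset V} {π : Setoid V}
    (hsep : ∀ v ∈ F, ∀ w ∈ G, ¬ π.r v w) :
    blkF (F ∪ G) π = blkF F π ∪ blkF G π := by
  have hsep' : ∀ v ∈ G, ∀ w ∈ F, ¬ π.r v w := fun v hv w hw h =>
    hsep w hw v hv (π.iseqv.symm h)
  unfold blkF
  rw [Finset.image_union]
  congr 1
  · refine Finset.image_congr fun v hv => ?_
    ext w
    simp only [Finset.mem_filter, Finset.mem_union]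
    constructor
    · rintro ⟨hw | hw, hr⟩
      · exact ⟨hw, hr⟩
      · exact absurd hr (hsep v hv w hw)
    · rintro ⟨hw, hr⟩; exact ⟨Or.inl hw, hr⟩
  · refine Finset.image_congr fun v hv => ?_
    ext w
    simp only [Finset.mem_filter, Finset.mem_union]
    constructor
    · rintro ⟨hw | hw, hr⟩
      · exact absurd hr (hsep' v hv w hw)
      · exact ⟨hw, hr⟩
    · rintro ⟨hw, hr⟩; exact ⟨Or.inr hw, hr⟩

lemma cylW_union {p : ℝ} {F G : Finset V} {π : Setoid V} {b : V → Bool}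
    (hFG : Disjoint F G) (hsep : ∀ v ∈ F, ∀ w ∈ G, ¬ π.r v w) :
    cylW p (F ∪ G) π b = cylW p F π b * cylW p G π b := by
  rw [cylW_eq_prod, cylW_eq_prod, cylW_eq_prod, blkF_union hsep]
  refine Finset.prod_union ?_
  rw [Finset.disjoint_left]
  rintro B hBF hBG
  obtain ⟨v, hv⟩ := blkF_nonempty hBF
  exact Finset.disjoint_left.mp hFG (blkF_subset hBF hv) (blkF_subset hBG hv)
end Aux2
section Aux3
open MeasurableSpace Filter Set

variable {V : Type*} [DecidableEq V]

lemma fac_image_sub {d : ℕ} (p : ℝ) (b : Vd d → Bool) (x : Vd d) (B : Finset (Vd d)) :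
    fac p (fun w => b (w + x)) (B.image (fun v => v - x)) = fac p b B := by
  unfold fac
  have h : ∀ t : Bool, ((∀ i ∈ B.image (fun v => v - x), b (i + x) = t) ↔ ∀ i ∈ B, b i = t) := by
    intro t
    constructor
    · intro h i hi
      have := h (i - x) (Finset.mem_image_of_mem _ hi)
      simpa using this
    · intro h i hi
      obtain ⟨j, hj, rfl⟩ := Finset.mem_image.mp hi
      simpa using h j hj
  rw [if_congr (h true) rfl rfl, if_congr (h false) rfl rfl]

set_option maxHeartbeats 1000000 in
lemma cylW_shift {d : ℕ} (p : ℝ) (F : Finset (Vd d)) (π : Setoid (Vd d)) (b : Vd d → Bool)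
    (x : Vd d) :
    cylW p F (shiftSetoid x π) b = cylW p (F.image (fun v => v - x)) π (fun w => b (w + x)) := by
  have hfinj : Function.Injective (fun v : Vd d => v - x) := fun a b h => by
    have := congrArg (· + x) h; simpa using this
  have hfilter : ∀ v : Vd d,
      (F.filter (fun w => (shiftSetoid x π).r v w)).image (fun v => v - x)
        = (F.image (fun v => v - x)).filter (fun w => π.r (v - x) w) := by
    intro v
    ext w'
    simp only [Finset.mem_filter, Finset.mem_image]
    constructor
    · rintro ⟨a, ⟨ha, hr⟩, rfl⟩
      exact ⟨⟨a, ha, rfl⟩, hr⟩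
    · rintro ⟨⟨a, ha, rfl⟩, hr⟩
      exact ⟨a, ⟨ha, hr⟩, rfl⟩
  have key : blkF (F.image (fun v => v - x)) π
      = (blkF F (shiftSetoid x π)).image (fun B => B.image (fun v => v - x)) := by
    ext B
    simp only [blkF, Finset.mem_image]
    constructor
    · rintro ⟨v', ⟨v, hv, rfl⟩, rfl⟩
      exact ⟨F.filter (fun w => (shiftSetoid x π).r v w), ⟨v, hv, rfl⟩, hfilter v⟩
    · rintro ⟨C, ⟨v, hv, rfl⟩, rfl⟩
      exact ⟨v - x, ⟨v, hv, rfl⟩, (hfilter v).symm⟩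
  rw [cylW_eq_prod, cylW_eq_prod, key, Finset.prod_image]
  · exact (Finset.prod_congr rfl fun B _ => (fac_image_sub p b x B)).symm
  · intro B _ C _ h
    exact Finset.image_injective hfinj h

/-- the pattern of the relation on `F × F`. -/
noncomputable def Jpat (F : Finset V) (π : Setoid V) : Finset (V × V) :=
  (F ×ˢ F).filter (fun q => π.r q.1 q.2)

noncomputable def gpat (p : ℝ) (b : V → Bool) (F : Finset V) (s : Finset (V × V)) : ℝ :=
  ∏ B ∈ F.image (fun v => F.filter (fun w => (v, w) ∈ s)), fac p b B

lemma cylW_eq_gpat (p : ℝ) (F : Finset V) (π : Setoid V) (b : V → Bool) :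
    cylW p F π b = gpat p b F (Jpat F π) := by
  rw [cylW_eq_prod]
  unfold gpat blkF
  refine (Finset.prod_congr ?_ fun _ _ => rfl).symm
  refine Finset.image_congr fun v hv => ?_
  refine Finset.filter_congr fun w hw => ?_
  simp only [Jpat, Finset.mem_filter, Finset.mem_product]
  exact ⟨fun h => h.2, fun h => ⟨⟨Finset.mem_coe.mp hv, hw⟩, h⟩⟩

lemma Jpat_mem_powerset (F : Finset V) (π : Setoid V) :
    Jpat F π ∈ (F ×ˢ F).powerset :=
  Finset.mem_powerset.mpr (Finset.filter_subset _ _)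

lemma measurableSet_Jpat_eq (F : Finset V) (s : Finset (V × V))
    (hs : s ⊆ F ×ˢ F) : MeasurableSet {π : Setoid V | Jpat F π = s} := by
  have : {π : Setoid V | Jpat F π = s}
      = ⋂ q ∈ (F ×ˢ F : Finset (V × V)), {π : Setoid V | q ∈ s ↔ π.r q.1 q.2} := by
    ext π
    simp only [Set.mem_setOf_eq, Set.mem_iInter]
    constructor
    · rintro rfl q hq
      simp [Jpat, Finset.mem_filter, hq]
    · intro h
      ext q
      by_cases hq : q ∈ F ×ˢ F
      · simp only [Jpat, Finset.mem_filter, hq, true_and]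
        exact (h q hq).symm
      · constructor
        · intro hmem
          exact absurd (Finset.filter_subset _ _ hmem) hq
        · intro hmem; exact absurd (hs hmem) hq
  rw [this]
  refine MeasurableSet.biInter (Finset.countable_toSet _) fun q _ => ?_
  by_cases hq : q ∈ s
  · simp only [hq, true_iff]
    exact measurableSet_rel _ _
  · have : {π : Setoid V | q ∈ s ↔ π.r q.1 q.2} = {π : Setoid V | π.r q.1 q.2}ᶜ := by
      ext π; simp [hq]
    rw [this]
    exact (measurableSet_rel _ _).compl

lemma measurable_cylW (p : ℝ) (F : Finset V) (b : V → Bool) :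
    Measurable (fun π : Setoid V => cylW p F π b) := by
  have hrep : (fun π : Setoid V => cylW p F π b)
      = fun π => ∑ s ∈ (F ×ˢ F).powerset, if Jpat F π = s then gpat p b F s else 0 := by
    funext π
    rw [cylW_eq_gpat, Finset.sum_ite_eq, if_pos (Jpat_mem_powerset F π)]
  rw [hrep]
  refine Finset.measurable_sum _ fun s hs => ?_
  have hms := measurableSet_Jpat_eq F s (Finset.mem_powerset.mp hs)
  exact Measurable.ite hms measurable_const measurable_const

lemma finite_range_cylW (p : ℝ) (F : Finset V) (b : V → Bool) :
    (Set.range (fun π : Setoid V => cylW p F π b)).Finite := by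
  refine Set.Finite.subset (Set.Finite.image (gpat p b F) (((F ×ˢ F).powerset : Finset _).finite_toSet)) ?_
  rintro r ⟨π, rfl⟩
  exact ⟨Jpat F π, Jpat_mem_powerset F π, (cylW_eq_gpat p F π b).symm⟩

end Aux3
section Aux4
open MeasurableSpace Filter Set

variable {d : ℕ}

lemma shiftSetoid_r (x : Vd d) (π : Setoid (Vd d)) (a b : Vd d) :
    (shiftSetoid x π).r a b ↔ π.r (a - x) (b - x) := Iff.rfl

lemma shiftSetoid_zero (π : Setoid (Vd d)) : shiftSetoid 0 π = π :=
  Setoid.ext fun a b => by rw [shiftSetoid_r, sub_zero, sub_zero]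

lemma shiftSetoid_comp (x y : Vd d) (π : Setoid (Vd d)) :
    shiftSetoid x (shiftSetoid y π) = shiftSetoid (x + y) π :=
  Setoid.ext fun a b => by
    rw [shiftSetoid_r, shiftSetoid_r, shiftSetoid_r, sub_sub, sub_sub]

lemma measurable_shiftSetoid (x : Vd d) : Measurable (shiftSetoid x) := by
  refine measurable_generateFrom ?_
  rintro _ ⟨v, w, rfl⟩
  have : shiftSetoid x ⁻¹' {π : Setoid (Vd d) | π.r v w}
      = {π : Setoid (Vd d) | π.r (v - x) (w - x)} := rfl
  rw [this]
  exact measurableSet_rel _ _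

/-- `shiftSetoid` as a measurable equivalence. -/
noncomputable def shiftSetoidEquiv (x : Vd d) : Setoid (Vd d) ≃ᵐ Setoid (Vd d) where
  toFun := shiftSetoid x
  invFun := shiftSetoid (-x)
  left_inv := fun π => by rw [shiftSetoid_comp, neg_add_cancel, shiftSetoid_zero]
  right_inv := fun π => by rw [shiftSetoid_comp, add_neg_cancel, shiftSetoid_zero]
  measurable_toFun := measurable_shiftSetoid x
  measurable_invFun := measurable_shiftSetoid (-x)

lemma measurable_shiftCfg (x : Vd d) : Measurable (shiftCfg (d := d) x) :=
  measurable_pi_lambda _ fun y => measurable_pi_apply (y - x)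

lemma measurable_shiftPair (x : Vd d) : Measurable (shiftPair (d := d) x) :=
  ((measurable_shiftSetoid x).comp measurable_fst).prodMk
    ((measurable_shiftCfg x).comp measurable_snd)

lemma measurableSet_cylEvent {V : Type*} (F : Finset V) (b : V → Bool) :
    MeasurableSet (cylEvent F b) := by
  have : cylEvent F b = ⋂ v ∈ (F : Set V), (fun x : V → Bool => x v) ⁻¹' {b v} := by
    ext x; simp [cylEvent]
  rw [this]
  exact MeasurableSet.biInter (Finset.countable_toSet F)
    (fun v _ => (measurable_pi_apply v) (MeasurableSet.singleton (b v)))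

lemma shiftCfg_preimage_cylEvent (x : Vd d) (G : Finset (Vd d)) (c : Vd d → Bool) :
    shiftCfg x ⁻¹' cylEvent G c
      = cylEvent (G.image (fun v => v - x)) (fun w => c (w + x)) := by
  ext ω
  simp only [cylEvent, Set.mem_preimage, Set.mem_setOf_eq, shiftCfg, Finset.mem_image]
  constructor
  · rintro h w ⟨v, hv, rfl⟩
    simpa using h v hv
  · intro h v hv
    have := h (v - x) ⟨v, hv, rfl⟩
    simpa using this

lemma cylEvent_inter {V : Type*} {F G : Finset V} {b c : V → Bool} (hFG : Disjoint F G) :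
    cylEvent F b ∩ cylEvent G c
      = cylEvent (F ∪ G) (fun v => if v ∈ F then b v else c v) := by
  ext ω
  simp only [cylEvent, Set.mem_inter_iff, Set.mem_setOf_eq, Finset.mem_union]
  constructor
  · rintro ⟨hb, hc⟩ v hv
    by_cases hvF : v ∈ F
    · simp [hvF, hb v hvF]
    · simp only [if_neg hvF]
      exact hc v (hv.resolve_left hvF)
  · intro h
    constructor
    · intro v hv
      have := h v (Or.inl hv)
      rwa [if_pos hv] at this
    · intro v hv
      have := h v (Or.inr hv)
      rwa [if_neg (fun hvF => Finset.disjoint_left.mp hFG hvF hv)] at this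

lemma stationary_pair {ν : Measure (Setoid (Vd d))} (hstat : StationaryRER ν)
    (a c : Vd d) : ν {π : Setoid (Vd d) | π.r a c} = ν {π : Setoid (Vd d) | π.r (a - c) 0} := by
  have := hstat c
  conv_lhs => rw [← this]
  rw [Measure.map_apply (measurable_shiftSetoid c) (measurableSet_rel a c)]
  congr 1
  ext π
  simp [shiftSetoid_r, sub_self]

end Aux4
section Aux5
open MeasurableSpace Filter Set

variable {V : Type*} {d : ℕ}

/-- The family of cylinder events. -/
def cylSets (V : Type*) : Set (Set (V → Bool)) :=
  {C | ∃ (F : Finset V) (b : V → Bool), C = cylEvent F b}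

lemma univ_mem_cylSets : Set.univ ∈ cylSets V :=
  ⟨∅, fun _ => true, by ext ω; simp [cylEvent]⟩

lemma isCountablySpanning_cylSets : IsCountablySpanning (cylSets V) :=
  ⟨fun _ => Set.univ, fun _ => univ_mem_cylSets, Set.iUnion_const _⟩

lemma isPiSystem_cylSets : IsPiSystem (cylSets V) := by
  rintro _ ⟨F, b, rfl⟩ _ ⟨G, c, rfl⟩ hne
  obtain ⟨ω, hωF, hωG⟩ := hne
  refine ⟨F ∪ G, fun v => if v ∈ F then b v else c v, ?_⟩
  ext ω'
  simp only [cylEvent, Set.mem_inter_iff, Set.mem_setOf_eq, Finset.mem_union]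
  constructor
  · rintro ⟨hb, hc⟩ v hv
    by_cases hvF : v ∈ F
    · simp [hvF, hb v hvF]
    · simp only [if_neg hvF]
      exact hc v (hv.resolve_left hvF)
  · intro h
    constructor
    · intro v hv
      have := h v (Or.inl hv)
      rwa [if_pos hv] at this
    · intro v hv
      have := h v (Or.inr hv)
      by_cases hvF : v ∈ F
      · rw [if_pos hvF] at this
        rw [this, ← hωF v hvF, hωG v hv]
      · rwa [if_neg hvF] at this

lemma pi_eq_generateFrom_cylSets :
    (inferInstance : MeasurableSpace (V → Bool)) = generateFrom (cylSets V) := by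
  refine le_antisymm ?_ ?_
  · rw [MeasurableSpace.pi]
    refine iSup_le fun v => ?_
    rw [MeasurableSpace.comap_le_iff_le_map]
    intro s hs
    show MeasurableSet[generateFrom (cylSets V)] ((fun x : V → Bool => x v) ⁻¹' s)
    have hone : ∀ t : Bool, MeasurableSet[generateFrom (cylSets V)]
        ((fun x : V → Bool => x v) ⁻¹' {t}) := by
      intro t
      refine measurableSet_generateFrom ⟨{v}, fun _ => t, ?_⟩
      ext x
      simp [cylEvent]
    have : (fun x : V → Bool => x v) ⁻¹' s
        = ⋃ t ∈ s, (fun x : V → Bool => x v) ⁻¹' {t} := by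
      ext x; simp
    rw [this]
    exact MeasurableSet.biUnion (Set.to_countable s) fun t _ => hone t
  · refine generateFrom_le ?_
    rintro _ ⟨F, b, rfl⟩
    exact measurableSet_cylEvent F b

/-- The family of measurable rectangles with cylinder second factor. -/
def rectSets (d : ℕ) : Set (Set (Setoid (Vd d) × (Vd d → Bool))) :=
  Set.image2 (· ×ˢ ·) {A : Set (Setoid (Vd d)) | MeasurableSet A} (cylSets (Vd d))

lemma prod_eq_generateFrom_rectSets :
    (inferInstance : MeasurableSpace (Setoid (Vd d) × (Vd d → Bool)))
      = generateFrom (rectSets d) := by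
  have h := generateFrom_prod_eq (C := {A : Set (Setoid (Vd d)) | MeasurableSet A})
      (D := cylSets (Vd d))
      ⟨fun _ => Set.univ, fun _ => Set.mem_setOf_eq ▸ MeasurableSet.univ, Set.iUnion_const _⟩
      isCountablySpanning_cylSets
  rw [generateFrom_measurableSet, ← pi_eq_generateFrom_cylSets] at h
  exact h

lemma isPiSystem_rectSets : IsPiSystem (rectSets d) := by
  rintro _ ⟨A, hA, _, ⟨F, b, rfl⟩, rfl⟩ _ ⟨A', hA', _, ⟨G, c, rfl⟩, rfl⟩ hne
  rw [Set.prod_inter_prod]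
  have hne' : (cylEvent F b ∩ cylEvent G c).Nonempty := by
    obtain ⟨q, hq⟩ := hne
    rw [Set.prod_inter_prod] at hq
    exact ⟨q.2, hq.2⟩
  obtain ⟨H, e, hHe⟩ := isPiSystem_cylSets _ ⟨F, b, rfl⟩ _ ⟨G, c, rfl⟩ hne'
  have hA : MeasurableSet A := hA
  have hA' : MeasurableSet A' := hA'
  exact ⟨A ∩ A', hA.inter hA', cylEvent F b ∩ cylEvent G c, ⟨H, e, hHe⟩, rfl⟩

end Aux5
section Aux6
open MeasurableSpace Filter Set MeasureTheory

variable {α : Type*} {d : ℕ}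

lemma tendsto_ennreal_of_toReal {ι : Type*} {l : Filter ι} {f : ι → ℝ≥0∞} {L : ℝ≥0∞}
    (hf : ∀ i, f i ≠ ∞) (hL : L ≠ ∞)
    (h : Filter.Tendsto (fun i => (f i).toReal) l (nhds L.toReal)) :
    Filter.Tendsto f l (nhds L) := by
  have h1 : f = fun i => ENNReal.ofReal ((f i).toReal) :=
    funext fun i => (ENNReal.ofReal_toReal (hf i)).symm
  have h2 : L = ENNReal.ofReal L.toReal := (ENNReal.ofReal_toReal hL).symm
  rw [h1, h2]
  exact (ENNReal.continuous_ofReal.tendsto _).comp h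

lemma tendsto_toReal_of_ennreal {ι : Type*} {l : Filter ι} {f : ι → ℝ≥0∞} {L : ℝ≥0∞}
    (hL : L ≠ ∞) (h : Filter.Tendsto f l (nhds L)) :
    Filter.Tendsto (fun i => (f i).toReal) l (nhds L.toReal) :=
  (ENNReal.tendsto_toReal hL).comp h

lemma mixing_ext [m : MeasurableSpace α] (μ : Measure α) [IsProbabilityMeasure μ]
    (T : Vd d → α → α) (hTm : ∀ x, Measurable (T x)) (hTp : ∀ x, μ.map (T x) = μ)
    {s : Set (Set α)} (hgen : m = MeasurableSpace.generateFrom s) (hpi : IsPiSystem s)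
    (hmix : ∀ A ∈ s, ∀ B ∈ s, Filter.Tendsto (fun x : Vd d => μ (A ∩ T x ⁻¹' B))
      Filter.cofinite (nhds (μ A * μ B))) :
    ∀ A B : Set α, MeasurableSet A → MeasurableSet B →
      Filter.Tendsto (fun x : Vd d => μ (A ∩ T x ⁻¹' B)) Filter.cofinite
        (nhds (μ A * μ B)) := by
  have hfin : ∀ S : Set α, μ S ≠ ∞ := fun S => measure_ne_top μ S
  have hTinv : ∀ (x : Vd d) (B : Set α), MeasurableSet B → μ (T x ⁻¹' B) = μ B := by
    intro x B hB
    conv_rhs => rw [← hTp x]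
    rw [Measure.map_apply (hTm x) hB]
  -- real-valued version of the mixing property
  set P : Set α → Set α → Prop := fun A B =>
    Filter.Tendsto (fun x : Vd d => (μ (A ∩ T x ⁻¹' B)).toReal) Filter.cofinite
      (nhds ((μ A).toReal * (μ B).toReal)) with hP
  have toP : ∀ A B : Set α,
      Filter.Tendsto (fun x : Vd d => μ (A ∩ T x ⁻¹' B)) Filter.cofinite
        (nhds (μ A * μ B)) → P A B := by
    intro A B h
    have := tendsto_toReal_of_ennreal (by finiteness) h
    rwa [ENNReal.toReal_mul] at this
  have ofP : ∀ A B : Set α, P A B →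
      Filter.Tendsto (fun x : Vd d => μ (A ∩ T x ⁻¹' B)) Filter.cofinite
        (nhds (μ A * μ B)) := by
    intro A B h
    refine tendsto_ennreal_of_toReal (fun i => hfin _) (by finiteness) ?_
    rwa [ENNReal.toReal_mul]
  -- step 1 : A in the π-system, B arbitrary measurable
  have step1 : ∀ A ∈ s, ∀ B : Set α, MeasurableSet B → P A B := by
    intro A hAs
    have hA : MeasurableSet A := hgen ▸ measurableSet_generateFrom hAs
    refine MeasurableSpace.induction_on_inter hgen hpi ?_ ?_ ?_ ?_
    · -- empty
      simpa [P] using tendsto_const_nhds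
    · -- basic
      intro B hBs
      exact toP A B (hmix A hAs B hBs)
    · -- complement
      intro B hB hPB
      have key : ∀ x : Vd d, (μ (A ∩ T x ⁻¹' Bᶜ)).toReal
          = (μ A).toReal - (μ (A ∩ T x ⁻¹' B)).toReal := by
        intro x
        have h1 : μ (A ∩ T x ⁻¹' B) + μ (A \ T x ⁻¹' B) = μ A :=
          measure_inter_add_diff A ((hTm x) hB)
        have h2 : A ∩ T x ⁻¹' Bᶜ = A \ T x ⁻¹' B := by
          rw [Set.preimage_compl, Set.diff_eq]
        rw [h2]
        have h3 := congrArg ENNReal.toReal h1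
        rw [ENNReal.toReal_add (hfin _) (hfin _)] at h3
        linarith
      have hBc : (μ Bᶜ).toReal = 1 - (μ B).toReal := by
        rw [prob_compl_eq_one_sub hB,
          ENNReal.toReal_sub_of_le prob_le_one (by simp), ENNReal.toReal_one]
      simp only [P, key, hBc]
      have := (tendsto_const_nhds (x := (μ A).toReal)
        (f := Filter.cofinite (α := Vd d))).sub hPB
      convert this using 2
      ring
    · -- disjoint union
      intro f hdisj hfm hPf
      have hmeasx : ∀ x : Vd d, ∀ n : ℕ, MeasurableSet (A ∩ T x ⁻¹' f n) :=
        fun x n => hA.inter ((hTm x) (hfm n))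
      have key : ∀ x : Vd d, (μ (A ∩ T x ⁻¹' ⋃ n, f n)).toReal
          = ∑' n, (μ (A ∩ T x ⁻¹' f n)).toReal := by
        intro x
        rw [Set.preimage_iUnion, Set.inter_iUnion, measure_iUnion ?_ (hmeasx x),
          ENNReal.tsum_toReal_eq (fun n => hfin _)]
        intro i j hij
        exact (((hdisj hij).preimage (T x)).mono Set.inter_subset_right
          Set.inter_subset_right)
      have hsum : ∑' n, μ (f n) ≠ ∞ := by
        rw [← measure_iUnion hdisj hfm]; exact hfin _
      have hsummable : Summable (fun n => (μ (f n)).toReal) :=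
        ENNReal.summable_toReal hsum
      have hlim : Filter.Tendsto (fun x : Vd d => ∑' n, (μ (A ∩ T x ⁻¹' f n)).toReal)
          Filter.cofinite (nhds (∑' n, (μ A).toReal * (μ (f n)).toReal)) := by
        refine tendsto_tsum_of_dominated_convergence hsummable hPf ?_
        refine Filter.Eventually.of_forall fun x n => ?_
        rw [Real.norm_eq_abs, abs_of_nonneg ENNReal.toReal_nonneg]
        refine ENNReal.toReal_mono (hfin _) ?_
        calc μ (A ∩ T x ⁻¹' f n) ≤ μ (T x ⁻¹' f n) := measure_mono Set.inter_subset_right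
          _ = μ (f n) := hTinv x (f n) (hfm n)
      have htsum : ∑' n, (μ A).toReal * (μ (f n)).toReal
          = (μ A).toReal * (μ (⋃ n, f n)).toReal := by
        rw [tsum_mul_left, measure_iUnion hdisj hfm,
          ENNReal.tsum_toReal_eq (fun n => hfin _)]
      simp only [P, key]
      rw [← htsum]
      exact hlim
  -- step 2 : A arbitrary measurable, B arbitrary measurable
  have step2 : ∀ B : Set α, MeasurableSet B → ∀ A : Set α, MeasurableSet A → P A B := by
    intro B hB
    refine MeasurableSpace.induction_on_inter hgen hpi ?_ ?_ ?_ ?_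
    · simpa [P] using tendsto_const_nhds
    · intro A hAs
      exact step1 A hAs B hB
    · intro A hA hPA
      have key : ∀ x : Vd d, (μ (Aᶜ ∩ T x ⁻¹' B)).toReal
          = (μ B).toReal - (μ (A ∩ T x ⁻¹' B)).toReal := by
        intro x
        have h1 : μ (T x ⁻¹' B ∩ A) + μ (T x ⁻¹' B \ A) = μ (T x ⁻¹' B) :=
          measure_inter_add_diff _ hA
        have h2 : Aᶜ ∩ T x ⁻¹' B = T x ⁻¹' B \ A := by
          rw [Set.diff_eq, Set.inter_comm]
        have h4 : A ∩ T x ⁻¹' B = T x ⁻¹' B ∩ A := Set.inter_comm _ _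
        rw [h2, h4]
        have h3 := congrArg ENNReal.toReal h1
        rw [ENNReal.toReal_add (hfin _) (hfin _), hTinv x B hB] at h3
        linarith
      have hAc : (μ Aᶜ).toReal = 1 - (μ A).toReal := by
        rw [prob_compl_eq_one_sub hA,
          ENNReal.toReal_sub_of_le prob_le_one (by simp), ENNReal.toReal_one]
      simp only [P, key, hAc]
      have := (tendsto_const_nhds (x := (μ B).toReal)
        (f := Filter.cofinite (α := Vd d))).sub hPA
      convert this using 2
      ring
    · intro f hdisj hfm hPf
      have hmeasx : ∀ x : Vd d, ∀ n : ℕ, MeasurableSet (f n ∩ T x ⁻¹' B) :=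
        fun x n => (hfm n).inter ((hTm x) hB)
      have key : ∀ x : Vd d, (μ ((⋃ n, f n) ∩ T x ⁻¹' B)).toReal
          = ∑' n, (μ (f n ∩ T x ⁻¹' B)).toReal := by
        intro x
        rw [Set.iUnion_inter, measure_iUnion ?_ (hmeasx x),
          ENNReal.tsum_toReal_eq (fun n => hfin _)]
        intro i j hij
        exact ((hdisj hij).mono Set.inter_subset_left Set.inter_subset_left)
      have hsum : ∑' n, μ (f n) ≠ ∞ := by
        rw [← measure_iUnion hdisj hfm]; exact hfin _
      have hsummable : Summable (fun n => (μ (f n)).toReal) :=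
        ENNReal.summable_toReal hsum
      have hlim : Filter.Tendsto (fun x : Vd d => ∑' n, (μ (f n ∩ T x ⁻¹' B)).toReal)
          Filter.cofinite (nhds (∑' n, (μ (f n)).toReal * (μ B).toReal)) := by
        refine tendsto_tsum_of_dominated_convergence hsummable hPf ?_
        refine Filter.Eventually.of_forall fun x n => ?_
        rw [Real.norm_eq_abs, abs_of_nonneg ENNReal.toReal_nonneg]
        exact ENNReal.toReal_mono (hfin _) (measure_mono Set.inter_subset_left)
      have htsum : ∑' n, (μ (f n)).toReal * (μ B).toReal
          = (μ (⋃ n, f n)).toReal * (μ B).toReal := by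
        rw [tsum_mul_right, measure_iUnion hdisj hfm,
          ENNReal.tsum_toReal_eq (fun n => hfin _)]
      simp only [P, key]
      rw [← htsum]
      exact hlim
  intro A B hA hB
  exact ofP A B (step2 B hB A hA)

end Aux6
section Aux7
open MeasurableSpace Filter Set MeasureTheory

variable {α : Type*} [MeasurableSpace α] {d : ℕ}

lemma setIntegral_finite_range (ν : Measure α) [IsProbabilityMeasure ν]
    {h : α → ℝ} (hh : Measurable h) {R : Finset ℝ} (hR : ∀ a, h a ∈ R)
    {S : Set α} (hS : MeasurableSet S) :
    ∫ a in S, h a ∂ν = ∑ c ∈ R, c * (ν (S ∩ h ⁻¹' {c})).toReal := by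
  have hpt : ∀ a, h a = ∑ c ∈ R, if h a = c then c else 0 := by
    intro a
    rw [Finset.sum_ite_eq R (h a) (fun c => c), if_pos (hR a)]
  have hind : ∀ c : ℝ, (fun a => if h a = c then c else 0)
      = Set.indicator (h ⁻¹' {c}) (fun _ => c) := by
    intro c
    funext a
    rw [Set.indicator_apply]
    simp [Set.mem_preimage]
  calc ∫ a in S, h a ∂ν = ∫ a in S, ∑ c ∈ R, (if h a = c then c else 0) ∂ν := by
        refine integral_congr_ae (Filter.Eventually.of_forall fun a => hpt a)
    _ = ∑ c ∈ R, ∫ a in S, (if h a = c then c else 0) ∂ν := by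
        refine integral_finset_sum R fun c _ => ?_
        rw [hind c]
        exact (integrable_const c).indicator (hh (measurableSet_singleton c))
    _ = ∑ c ∈ R, c * (ν (S ∩ h ⁻¹' {c})).toReal := by
        refine Finset.sum_congr rfl fun c _ => ?_
        rw [hind c, setIntegral_indicator (hh (measurableSet_singleton c)),
          setIntegral_const, smul_eq_mul, mul_comm, measureReal_def]

lemma mixing_integral {ν : Measure (Setoid (Vd d))} [IsProbabilityMeasure ν]
    (hmix : MixingRER ν) {f g : Setoid (Vd d) → ℝ}
    (hf : Measurable f) (hg : Measurable g)
    (hfr : (Set.range f).Finite) (hgr : (Set.range g).Finite)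
    {A A' : Set (Setoid (Vd d))} (hA : MeasurableSet A) (hA' : MeasurableSet A') :
    Filter.Tendsto
      (fun x : Vd d => ∫ π in A ∩ shiftSetoid x ⁻¹' A', f π * g (shiftSetoid x π) ∂ν)
      Filter.cofinite
      (nhds ((∫ π in A, f π ∂ν) * (∫ π in A', g π ∂ν))) := by
  classical
  set Rf := hfr.toFinset with hRf
  set Rg := hgr.toFinset with hRg
  have hfmem : ∀ π, f π ∈ Rf := fun π => hfr.mem_toFinset.mpr ⟨π, rfl⟩
  have hgmem : ∀ π, g π ∈ Rg := fun π => hgr.mem_toFinset.mpr ⟨π, rfl⟩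
  -- rewrite the integral as a finite sum of measures
  have key : ∀ x : Vd d,
      ∫ π in A ∩ shiftSetoid x ⁻¹' A', f π * g (shiftSetoid x π) ∂ν
        = ∑ q ∈ Rf ×ˢ Rg, q.1 * q.2 *
            (ν ((A ∩ f ⁻¹' {q.1}) ∩ shiftSetoid x ⁻¹' (A' ∩ g ⁻¹' {q.2}))).toReal := by
    intro x
    have hSx := measurable_shiftSetoid (d := d) x
    have hpt : ∀ π, f π * g (shiftSetoid x π)
        = ∑ q ∈ Rf ×ˢ Rg, (if f π = q.1 then q.1 else 0) *
            (if g (shiftSetoid x π) = q.2 then q.2 else 0) := by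
      intro π
      rw [Finset.sum_product]
      rw [← Finset.sum_mul_sum Rf Rg (fun c => if f π = c then c else 0)
        (fun c => if g (shiftSetoid x π) = c then c else 0)]
      congr 1
      · rw [Finset.sum_ite_eq Rf (f π) (fun c => c), if_pos (hfmem π)]
      · rw [Finset.sum_ite_eq Rg (g (shiftSetoid x π)) (fun c => c),
          if_pos (hgmem (shiftSetoid x π))]
    have hind : ∀ q : ℝ × ℝ, (fun π => (if f π = q.1 then q.1 else 0) *
        (if g (shiftSetoid x π) = q.2 then q.2 else 0))
        = Set.indicator (f ⁻¹' {q.1} ∩ shiftSetoid x ⁻¹' (g ⁻¹' {q.2}))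
            (fun _ => q.1 * q.2) := by
      intro q
      funext π
      rw [Set.indicator_apply]
      by_cases h1 : f π = q.1 <;> by_cases h2 : g (shiftSetoid x π) = q.2 <;>
        simp [h1, h2, Set.mem_inter_iff, Set.mem_preimage]
    have hmeas : ∀ q : ℝ × ℝ,
        MeasurableSet (f ⁻¹' {q.1} ∩ shiftSetoid x ⁻¹' (g ⁻¹' {q.2})) :=
      fun q => (hf (measurableSet_singleton q.1)).inter
        (hSx (hg (measurableSet_singleton q.2)))
    calc ∫ π in A ∩ shiftSetoid x ⁻¹' A', f π * g (shiftSetoid x π) ∂ν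
        = ∫ π in A ∩ shiftSetoid x ⁻¹' A',
            ∑ q ∈ Rf ×ˢ Rg, (if f π = q.1 then q.1 else 0) *
              (if g (shiftSetoid x π) = q.2 then q.2 else 0) ∂ν :=
          integral_congr_ae (Filter.Eventually.of_forall fun π => hpt π)
      _ = ∑ q ∈ Rf ×ˢ Rg, ∫ π in A ∩ shiftSetoid x ⁻¹' A',
            (if f π = q.1 then q.1 else 0) *
              (if g (shiftSetoid x π) = q.2 then q.2 else 0) ∂ν := by
          refine integral_finset_sum _ fun q _ => ?_
          rw [hind q]
          exact (integrable_const _).indicator (hmeas q)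
      _ = ∑ q ∈ Rf ×ˢ Rg, q.1 * q.2 *
            (ν ((A ∩ f ⁻¹' {q.1}) ∩ shiftSetoid x ⁻¹' (A' ∩ g ⁻¹' {q.2}))).toReal := by
          refine Finset.sum_congr rfl fun q _ => ?_
          have hset : (A ∩ shiftSetoid x ⁻¹' A')
              ∩ (f ⁻¹' {q.1} ∩ shiftSetoid x ⁻¹' (g ⁻¹' {q.2}))
              = (A ∩ f ⁻¹' {q.1}) ∩ shiftSetoid x ⁻¹' (A' ∩ g ⁻¹' {q.2}) := by
            ext π
            simp only [Set.mem_inter_iff, Set.mem_preimage]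
            tauto
          rw [hind q, setIntegral_indicator (hmeas q), hset, setIntegral_const,
            smul_eq_mul, mul_comm, measureReal_def]
  have hterm : ∀ q ∈ Rf ×ˢ Rg, Filter.Tendsto
      (fun x : Vd d => q.1 * q.2 *
        (ν ((A ∩ f ⁻¹' {q.1}) ∩ shiftSetoid x ⁻¹' (A' ∩ g ⁻¹' {q.2}))).toReal)
      Filter.cofinite
      (nhds (q.1 * q.2 * ((ν (A ∩ f ⁻¹' {q.1})).toReal * (ν (A' ∩ g ⁻¹' {q.2})).toReal))) := by
    intro q _
    have h1 := hmix (A ∩ f ⁻¹' {q.1}) (A' ∩ g ⁻¹' {q.2})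
      (hA.inter (hf (measurableSet_singleton q.1)))
      (hA'.inter (hg (measurableSet_singleton q.2)))
    have h2 := tendsto_toReal_of_ennreal (by finiteness) h1
    rw [ENNReal.toReal_mul] at h2
    exact h2.const_mul _
  have hsum := tendsto_finset_sum (Rf ×ˢ Rg) hterm
  have hfinal : ∑ q ∈ Rf ×ˢ Rg, q.1 * q.2 *
      ((ν (A ∩ f ⁻¹' {q.1})).toReal * (ν (A' ∩ g ⁻¹' {q.2})).toReal)
      = (∫ π in A, f π ∂ν) * (∫ π in A', g π ∂ν) := by
    rw [setIntegral_finite_range ν hf hfmem hA, setIntegral_finite_range ν hg hgmem hA',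
      Finset.sum_mul_sum, Finset.sum_product]
    refine Finset.sum_congr rfl fun c _ => Finset.sum_congr rfl fun c' _ => ?_
    ring
  rw [← hfinal]
  refine Filter.Tendsto.congr (fun x => (key x).symm) hsum
end Aux7
section Aux8
open MeasurableSpace Filter Set MeasureTheory

variable {d : ℕ}

/-- The bad event: some point of `F` is related to some point of `G - x`. -/
def badE (F G : Finset (Vd d)) (x : Vd d) : Set (Setoid (Vd d)) :=
  ⋃ v ∈ F, ⋃ w ∈ G, {π : Setoid (Vd d) | π.r v (w - x)}

lemma measurableSet_badE (F G : Finset (Vd d)) (x : Vd d) :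
    MeasurableSet (badE F G x) := by
  refine MeasurableSet.biUnion (Finset.countable_toSet F) fun v _ => ?_
  exact MeasurableSet.biUnion (Finset.countable_toSet G)
    fun w _ => measurableSet_rel _ _

lemma sep_of_not_badE {F G : Finset (Vd d)} {x : Vd d} {π : Setoid (Vd d)}
    (h : π ∉ badE F G x) :
    ∀ v ∈ F, ∀ w ∈ G.image (fun v => v - x), ¬ π.r v w := by
  intro v hv w hw hr
  obtain ⟨w', hw', rfl⟩ := Finset.mem_image.mp hw
  exact h (Set.mem_biUnion hv (Set.mem_biUnion hw' hr))

lemma tendsto_badE {ν : Measure (Setoid (Vd d))} (hstat : StationaryRER ν)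
    (hvan : Filter.Tendsto (fun x : Vd d => ν {π : Setoid (Vd d) | π.r x 0})
      Filter.cofinite (nhds 0)) (F G : Finset (Vd d)) :
    Filter.Tendsto (fun x : Vd d => ν (badE F G x)) Filter.cofinite (nhds 0) := by
  have hbound : ∀ x : Vd d, ν (badE F G x)
      ≤ ∑ v ∈ F, ∑ w ∈ G, ν {π : Setoid (Vd d) | π.r (v - w + x) 0} := by
    intro x
    refine le_trans (measure_biUnion_finset_le F _) (Finset.sum_le_sum fun v _ => ?_)
    refine le_trans (measure_biUnion_finset_le G _) (Finset.sum_le_sum fun w _ => ?_)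
    rw [stationary_pair hstat v (w - x)]
    have : v - (w - x) = v - w + x := by abel
    rw [this]
  have hsum : Filter.Tendsto
      (fun x : Vd d => ∑ v ∈ F, ∑ w ∈ G, ν {π : Setoid (Vd d) | π.r (v - w + x) 0})
      Filter.cofinite (nhds 0) := by
    have h0 : (0 : ℝ≥0∞) = ∑ v ∈ F, ∑ w ∈ G, (0 : ℝ≥0∞) := by simp
    rw [h0]
    refine tendsto_finset_sum F fun v _ => tendsto_finset_sum G fun w _ => ?_
    have hinj : Function.Injective (fun x : Vd d => v - w + x) :=
      fun a b h => by simpa using h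
    exact hvan.comp (hinj.tendsto_cofinite)
  exact tendsto_of_tendsto_of_tendsto_of_le_of_le tendsto_const_nhds hsum
    (fun x => zero_le) hbound

lemma integrable_of_abs_le {α : Type*} [MeasurableSpace α] {ν : Measure α}
    [IsFiniteMeasure ν] {h : α → ℝ} (hm : Measurable h) (C : ℝ) (hb : ∀ a, |h a| ≤ C) :
    Integrable h ν :=
  ⟨hm.aestronglyMeasurable, HasFiniteIntegral.of_bounded (C := C)
    (Filter.Eventually.of_forall fun a => by simpa [Real.norm_eq_abs] using hb a)⟩

lemma core_tendsto {p : ℝ} (hp : p ∈ Set.Icc (0:ℝ) 1)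
    {ν : Measure (Setoid (Vd d))} [IsProbabilityMeasure ν]
    (hstat : StationaryRER ν)
    (hvan : Filter.Tendsto (fun x : Vd d => ν {π : Setoid (Vd d) | π.r x 0})
      Filter.cofinite (nhds 0))
    (hmix : MixingRER ν)
    {A A' : Set (Setoid (Vd d))} (hA : MeasurableSet A) (hA' : MeasurableSet A')
    (F G : Finset (Vd d)) (b c : Vd d → Bool) :
    Filter.Tendsto
      (fun x : Vd d => ∫ π in A ∩ shiftSetoid x ⁻¹' A',
        cylW p (F ∪ G.image (fun v => v - x)) π
          (fun v => if v ∈ F then b v else c (v + x)) ∂ν)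
      Filter.cofinite
      (nhds ((∫ π in A, cylW p F π b ∂ν) * (∫ π in A', cylW p G π c ∂ν))) := by
  classical
  set f : Setoid (Vd d) → ℝ := fun π => cylW p F π b with hf_def
  set g : Setoid (Vd d) → ℝ := fun π => cylW p G π c with hg_def
  have hfm : Measurable f := measurable_cylW p F b
  have hgm : Measurable g := measurable_cylW p G c
  have hmain := mixing_integral hmix hfm hgm (finite_range_cylW p F b)
    (finite_range_cylW p G c) hA hA'
  set u : Vd d → Setoid (Vd d) → ℝ := fun x π =>
    cylW p (F ∪ G.image (fun v => v - x)) π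
      (fun v => if v ∈ F then b v else c (v + x)) with hu_def
  set v : Vd d → Setoid (Vd d) → ℝ := fun x π => f π * g (shiftSetoid x π) with hv_def
  -- eventual disjointness
  have hdisj : ∀ᶠ x : Vd d in Filter.cofinite, Disjoint F (G.image (fun v => v - x)) := by
    have hsub : {x : Vd d | ¬ Disjoint F (G.image (fun v => v - x))}
        ⊆ ((G ×ˢ F).image (fun q => q.1 - q.2) : Finset (Vd d)) := by
      intro x hx
      rw [Set.mem_setOf_eq, Finset.not_disjoint_iff] at hx
      obtain ⟨a, haF, haG⟩ := hx
      obtain ⟨w, hw, rfl⟩ := Finset.mem_image.mp haG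
      refine Finset.mem_coe.mpr (Finset.mem_image.mpr ⟨(w, w - x), ?_, ?_⟩)
      · exact Finset.mem_product.mpr ⟨hw, haF⟩
      · exact sub_sub_cancel w x
    have hfin : {x : Vd d | ¬ Disjoint F (G.image (fun v => v - x))}.Finite :=
      Set.Finite.subset (Finset.finite_toSet _) hsub
    exact (Set.Finite.eventually_cofinite_notMem hfin).mono fun x hx => not_not.mp hx
  -- pointwise identity off the bad event
  have hpt : ∀ x : Vd d, Disjoint F (G.image (fun v => v - x)) →
      ∀ π, π ∉ badE F G x → u x π = v x π := by
    intro x hdis π hπ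
    have hsep := sep_of_not_badE hπ
    rw [hu_def]
    simp only
    rw [cylW_union hdis hsep]
    have h1 : cylW p F π (fun v => if v ∈ F then b v else c (v + x))
        = cylW p F π b := cylW_congr fun i hi => by rw [if_pos hi]
    have h2 : cylW p (G.image (fun v => v - x)) π
        (fun v => if v ∈ F then b v else c (v + x))
        = cylW p (G.image (fun v => v - x)) π (fun w => c (w + x)) :=
      cylW_congr fun i hi => by
        rw [if_neg (fun hiF => Finset.disjoint_left.mp hdis hiF hi)]
    rw [h1, h2, ← cylW_shift]
  -- bounds
  have hub : ∀ x π, u x π ∈ Set.Icc (0:ℝ) 1 := fun x π => cylW_mem_Icc hp _ _ _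
  have hvb : ∀ x π, v x π ∈ Set.Icc (0:ℝ) 1 := by
    intro x π
    have h1 := cylW_mem_Icc hp F π b
    have h2 := cylW_mem_Icc hp G (shiftSetoid x π) c
    exact ⟨mul_nonneg h1.1 h2.1, mul_le_one₀ h1.2 h2.1 h2.2⟩
  have hum : ∀ x, Measurable (u x) := fun x => measurable_cylW p _ _
  have hvm : ∀ x, Measurable (v x) := fun x =>
    hfm.mul (hgm.comp (measurable_shiftSetoid x))
  -- error bound
  have herr : ∀ x : Vd d, Disjoint F (G.image (fun v => v - x)) →
      |(∫ π in A ∩ shiftSetoid x ⁻¹' A', u x π ∂ν)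
        - ∫ π in A ∩ shiftSetoid x ⁻¹' A', v x π ∂ν|
      ≤ 2 * (ν (badE F G x)).toReal := by
    intro x hdis
    have hiu : Integrable (u x) ν := integrable_of_abs_le (hum x) 1
      (fun π => abs_le.mpr ⟨by linarith [(hub x π).1], (hub x π).2⟩)
    have hiv : Integrable (v x) ν := integrable_of_abs_le (hvm x) 1
      (fun π => abs_le.mpr ⟨by linarith [(hvb x π).1], (hvb x π).2⟩)
    have hidiff : Integrable (fun π => |u x π - v x π|) ν := (hiu.sub hiv).abs
    have hS : MeasurableSet (A ∩ shiftSetoid x ⁻¹' A') :=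
      hA.inter ((measurable_shiftSetoid x) hA')
    calc |(∫ π in A ∩ shiftSetoid x ⁻¹' A', u x π ∂ν)
          - ∫ π in A ∩ shiftSetoid x ⁻¹' A', v x π ∂ν|
        = |∫ π in A ∩ shiftSetoid x ⁻¹' A', (u x π - v x π) ∂ν| := by
          rw [integral_sub (hiu.restrict) (hiv.restrict)]
      _ ≤ ∫ π in A ∩ shiftSetoid x ⁻¹' A', |u x π - v x π| ∂ν := by
          simpa [Real.norm_eq_abs] using
          norm_integral_le_integral_norm (μ := (ν.restrict (A ∩ shiftSetoid x ⁻¹' A')))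
            (fun π => u x π - v x π)
      _ ≤ ∫ π, |u x π - v x π| ∂ν := by
          refine setIntegral_le_integral hidiff ?_
          exact Filter.Eventually.of_forall fun π => abs_nonneg _
      _ ≤ ∫ π, Set.indicator (badE F G x) (fun _ => (2:ℝ)) π ∂ν := by
          refine integral_mono hidiff ?_ ?_
          · exact (integrable_const (2:ℝ)).indicator (measurableSet_badE F G x)
          · intro π
            by_cases hπ : π ∈ badE F G x
            · rw [Set.indicator_of_mem hπ]
              have h1 := hub x π; have h2 := hvb x π
              rw [abs_sub_le_iff]
              constructor <;> linarith [h1.1, h1.2, h2.1, h2.2]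
            · have huv : u x π = v x π := hpt x hdis π hπ
              simp [Set.indicator_of_notMem hπ, huv]
      _ = 2 * (ν (badE F G x)).toReal := by
          rw [integral_indicator (measurableSet_badE F G x), setIntegral_const,
            smul_eq_mul, mul_comm, measureReal_def]
  -- conclude
  have hbad := tendsto_badE hstat hvan F G
  have hbadR : Filter.Tendsto (fun x : Vd d => 2 * (ν (badE F G x)).toReal)
      Filter.cofinite (nhds 0) := by
    have := tendsto_toReal_of_ennreal (by simp) hbad
    simpa using this.const_mul (2:ℝ)
  set I : Vd d → ℝ := fun x => ∫ π in A ∩ shiftSetoid x ⁻¹' A', u x π ∂ν with hI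
  set M : Vd d → ℝ := fun x => ∫ π in A ∩ shiftSetoid x ⁻¹' A', v x π ∂ν with hM
  have hdiff0 : Filter.Tendsto (fun x => I x - M x) Filter.cofinite (nhds 0) := by
    rw [tendsto_zero_iff_abs_tendsto_zero]
    refine tendsto_of_tendsto_of_tendsto_of_le_of_le' tendsto_const_nhds hbadR
      (Filter.Eventually.of_forall fun x => abs_nonneg _) ?_
    exact hdisj.mono fun x hx => herr x hx
  have : Filter.Tendsto (fun x => M x + (I x - M x)) Filter.cofinite
      (nhds ((∫ π in A, f π ∂ν) * (∫ π in A', g π ∂ν) + 0)) :=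
    Filter.Tendsto.add hmain hdiff0
  rw [add_zero] at this
  refine this.congr fun x => by ring
end Aux8
section Aux9
open MeasurableSpace Filter Set MeasureTheory

variable {d : ℕ}

lemma eventually_disjoint (F G : Finset (Vd d)) :
    ∀ᶠ x : Vd d in Filter.cofinite, Disjoint F (G.image (fun v => v - x)) := by
  have hsub : {x : Vd d | ¬ Disjoint F (G.image (fun v => v - x))}
      ⊆ ((G ×ˢ F).image (fun q => q.1 - q.2) : Finset (Vd d)) := by
    intro x hx
    rw [Set.mem_setOf_eq, Finset.not_disjoint_iff] at hx
    obtain ⟨a, haF, haG⟩ := hx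
    obtain ⟨w, hw, rfl⟩ := Finset.mem_image.mp haG
    refine Finset.mem_coe.mpr (Finset.mem_image.mpr ⟨(w, w - x), ?_, ?_⟩)
    · exact Finset.mem_product.mpr ⟨hw, haF⟩
    · exact sub_sub_cancel w x
  have hfin : {x : Vd d | ¬ Disjoint F (G.image (fun v => v - x))}.Finite :=
    Set.Finite.subset (Finset.finite_toSet _) hsub
  exact (Set.Finite.eventually_cofinite_notMem hfin).mono fun x hx => not_not.mp hx

lemma cylEvent_empty (b : Vd d → Bool) : cylEvent (∅ : Finset (Vd d)) b = Set.univ := by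
  ext ω; simp [cylEvent]

lemma cylW_empty (p : ℝ) (π : Setoid (Vd d)) (b : Vd d → Bool) :
    cylW p (∅ : Finset (Vd d)) π b = 1 := by
  rw [cylW_eq_prod]
  simp [blkF]

lemma setIntegral_shift {ν : Measure (Setoid (Vd d))} (hstat : StationaryRER ν)
    (x : Vd d) (h : Setoid (Vd d) → ℝ) (A : Set (Setoid (Vd d))) :
    ∫ π in shiftSetoid x ⁻¹' A, h (shiftSetoid x π) ∂ν = ∫ π in A, h π ∂ν := by
  have hmap : Measure.map (⇑(shiftSetoidEquiv x)) ν = ν := hstat x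
  conv_rhs => rw [← hmap]
  exact (MeasureTheory.setIntegral_map_equiv (shiftSetoidEquiv x) h A).symm

lemma shiftPair_preimage_prod (x : Vd d) (A : Set (Setoid (Vd d)))
    (C : Set (Vd d → Bool)) :
    shiftPair x ⁻¹' (A ×ˢ C) = (shiftSetoid x ⁻¹' A) ×ˢ (shiftCfg x ⁻¹' C) := rfl

variable {p : ℝ} {ν : Measure (Setoid (Vd d))} {Q : Measure (Setoid (Vd d) × (Vd d → Bool))}

lemma Q_prod_univ [IsProbabilityMeasure ν]
    (hQval : ∀ (A : Set (Setoid (Vd d))), MeasurableSet A →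
      ∀ (F : Finset (Vd d)) (b : Vd d → Bool),
        Q (A ×ˢ cylEvent F b) = ENNReal.ofReal (∫ π in A, cylW p F π b ∂ν))
    (A : Set (Setoid (Vd d))) (hA : MeasurableSet A) :
    Q (A ×ˢ (Set.univ : Set (Vd d → Bool))) = ν A := by
  rw [show (Set.univ : Set (Vd d → Bool)) = cylEvent ∅ (fun _ => true) from
    (cylEvent_empty _).symm, hQval A hA ∅ (fun _ => true)]
  have h2 : ∫ π in A, cylW p (∅ : Finset (Vd d)) π (fun _ => true) ∂ν
      = ∫ π in A, (1:ℝ) ∂ν :=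
    integral_congr_ae (Filter.Eventually.of_forall fun π => cylW_empty p π _)
  rw [h2, setIntegral_const, smul_eq_mul, mul_one, measureReal_def, ENNReal.ofReal_toReal (measure_ne_top ν A)]

lemma Q_map_shift [IsProbabilityMeasure ν] [IsProbabilityMeasure Q]
    (hstat : StationaryRER ν)
    (hQval : ∀ (A : Set (Setoid (Vd d))), MeasurableSet A →
      ∀ (F : Finset (Vd d)) (b : Vd d → Bool),
        Q (A ×ˢ cylEvent F b) = ENNReal.ofReal (∫ π in A, cylW p F π b ∂ν))
    (x : Vd d) : Q.map (shiftPair x) = Q := by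
  haveI : IsProbabilityMeasure (Q.map (shiftPair x)) :=
    Measure.isProbabilityMeasure_map (measurable_shiftPair x).aemeasurable
  refine ext_of_generate_finite (rectSets d) prod_eq_generateFrom_rectSets
    isPiSystem_rectSets ?_ ?_
  · rintro _ ⟨A, hA, _, ⟨F, b, rfl⟩, rfl⟩
    have hA : MeasurableSet A := hA
    rw [Measure.map_apply (measurable_shiftPair x)
      (hA.prod (measurableSet_cylEvent F b)), shiftPair_preimage_prod,
      shiftCfg_preimage_cylEvent,
      hQval _ ((measurable_shiftSetoid x) hA), hQval _ hA]
    congr 1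
    have hcong : ∫ π in shiftSetoid x ⁻¹' A,
        cylW p (F.image (fun v => v - x)) π (fun w => b (w + x)) ∂ν
        = ∫ π in shiftSetoid x ⁻¹' A, cylW p F (shiftSetoid x π) b ∂ν :=
      integral_congr_ae (Filter.Eventually.of_forall fun π => (cylW_shift p F π b x).symm)
    rw [hcong, setIntegral_shift hstat x (fun π => cylW p F π b) A]
  · simp

lemma mu_map_shift {μ : Measure (Vd d → Bool)} [IsProbabilityMeasure ν]
    [IsProbabilityMeasure μ] (hstat : StationaryRER ν)
    (hμval : ∀ (F : Finset (Vd d)) (b : Vd d → Bool),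
      μ (cylEvent F b) = ENNReal.ofReal (∫ π, cylW p F π b ∂ν))
    (x : Vd d) : μ.map (shiftCfg x) = μ := by
  haveI : IsProbabilityMeasure (μ.map (shiftCfg x)) :=
    Measure.isProbabilityMeasure_map (measurable_shiftCfg x).aemeasurable
  refine ext_of_generate_finite (cylSets (Vd d)) pi_eq_generateFrom_cylSets
    isPiSystem_cylSets ?_ ?_
  · rintro _ ⟨F, b, rfl⟩
    rw [Measure.map_apply (measurable_shiftCfg x) (measurableSet_cylEvent F b),
      shiftCfg_preimage_cylEvent, hμval _ _, hμval F b]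
    congr 1
    have hcong : ∫ π, cylW p (F.image (fun v => v - x)) π (fun w => b (w + x)) ∂ν
        = ∫ π, cylW p F (shiftSetoid x π) b ∂ν :=
      integral_congr_ae (Filter.Eventually.of_forall fun π => (cylW_shift p F π b x).symm)
    rw [hcong]
    have := setIntegral_shift hstat x (fun π => cylW p F π b) Set.univ
    simpa using this
  · simp

lemma joint_base (hp : p ∈ Set.Icc (0:ℝ) 1) [IsProbabilityMeasure ν]
    (hstat : StationaryRER ν)
    (hvan : Filter.Tendsto (fun x : Vd d => ν {π : Setoid (Vd d) | π.r x 0})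
      Filter.cofinite (nhds 0))
    (hmixR : MixingRER ν)
    (hQval : ∀ (A : Set (Setoid (Vd d))), MeasurableSet A →
      ∀ (F : Finset (Vd d)) (b : Vd d → Bool),
        Q (A ×ˢ cylEvent F b) = ENNReal.ofReal (∫ π in A, cylW p F π b ∂ν)) :
    ∀ R₁ ∈ rectSets d, ∀ R₂ ∈ rectSets d,
      Filter.Tendsto (fun x : Vd d => Q (R₁ ∩ shiftPair x ⁻¹' R₂)) Filter.cofinite
        (nhds (Q R₁ * Q R₂)) := by
  rintro _ ⟨A, hA, _, ⟨F, b, rfl⟩, rfl⟩ _ ⟨A', hA', _, ⟨G, c, rfl⟩, rfl⟩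
  have hA : MeasurableSet A := hA
  have hA' : MeasurableSet A' := hA'
  have hcore := core_tendsto hp hstat hvan hmixR hA hA' F G b c
  have hofReal := (ENNReal.continuous_ofReal.tendsto _).comp hcore
  have hlim : ENNReal.ofReal ((∫ π in A, cylW p F π b ∂ν) * (∫ π in A', cylW p G π c ∂ν))
      = Q (A ×ˢ cylEvent F b) * Q (A' ×ˢ cylEvent G c) := by
    rw [ENNReal.ofReal_mul (setIntegral_nonneg hA fun π _ => cylW_nonneg hp F π b),
      hQval A hA F b, hQval A' hA' G c]
  rw [hlim] at hofReal
  refine Filter.Tendsto.congr' ?_ hofReal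
  filter_upwards [eventually_disjoint F G] with x hdis
  have heq : (A ×ˢ cylEvent F b) ∩ shiftPair x ⁻¹' (A' ×ˢ cylEvent G c)
      = (A ∩ shiftSetoid x ⁻¹' A') ×ˢ
        cylEvent (F ∪ G.image (fun v => v - x))
          (fun v => if v ∈ F then b v else c (v + x)) := by
    rw [shiftPair_preimage_prod, Set.prod_inter_prod, shiftCfg_preimage_cylEvent,
      cylEvent_inter hdis]
    congr!
  simp only [Function.comp_apply]
  rw [heq, hQval _ (hA.inter ((measurable_shiftSetoid x) hA'))]

lemma cfg_base {μ : Measure (Vd d → Bool)} (hp : p ∈ Set.Icc (0:ℝ) 1)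
    [IsProbabilityMeasure ν] (hstat : StationaryRER ν)
    (hvan : Filter.Tendsto (fun x : Vd d => ν {π : Setoid (Vd d) | π.r x 0})
      Filter.cofinite (nhds 0))
    (hmixR : MixingRER ν)
    (hμval : ∀ (F : Finset (Vd d)) (b : Vd d → Bool),
      μ (cylEvent F b) = ENNReal.ofReal (∫ π, cylW p F π b ∂ν)) :
    ∀ C₁ ∈ cylSets (Vd d), ∀ C₂ ∈ cylSets (Vd d),
      Filter.Tendsto (fun x : Vd d => μ (C₁ ∩ shiftCfg x ⁻¹' C₂)) Filter.cofinite
        (nhds (μ C₁ * μ C₂)) := by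
  rintro _ ⟨F, b, rfl⟩ _ ⟨G, c, rfl⟩
  have hcore := core_tendsto hp hstat hvan hmixR MeasurableSet.univ MeasurableSet.univ F G b c
  simp only [Set.preimage_univ, Set.univ_inter, Measure.restrict_univ] at hcore
  have hofReal := (ENNReal.continuous_ofReal.tendsto _).comp hcore
  have hlim : ENNReal.ofReal ((∫ π, cylW p F π b ∂ν) * (∫ π, cylW p G π c ∂ν))
      = μ (cylEvent F b) * μ (cylEvent G c) := by
    rw [ENNReal.ofReal_mul (integral_nonneg fun π => cylW_nonneg hp F π b),
      hμval F b, hμval G c]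
  rw [hlim] at hofReal
  refine Filter.Tendsto.congr' ?_ hofReal
  filter_upwards [eventually_disjoint F G] with x hdis
  simp only [Function.comp_apply]
  rw [shiftCfg_preimage_cylEvent, cylEvent_inter hdis, hμval _ _]
  congr!

end Aux9
/-- **Theorem (Steif–Tykesson, Theorem 6.5).**
Fix `d ≥ 1`, `p ∈ (0,1)` and let `ν` be a stationary RER on `ℤ^d` such that
`ν(x and 0 lie in the same block) → 0` as `|x| → ∞`.  Then `ν` is mixing iff the joint law
`P_{ν,p}` of the partition together with its coloring is mixing; in particular, if `ν` is
mixing then the color process `Φ_p(ν)` is mixing. -/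
theorem mixing_transfer_of_vanishing_pair_correlations
    (d : ℕ) (hd : 1 ≤ d) (p : ℝ) (hp : p ∈ Set.Ioo (0:ℝ) 1)
    (ν : Measure (Setoid (Vd d))) [IsProbabilityMeasure ν] (hstat : StationaryRER ν)
    (hvan : Filter.Tendsto (fun x : Vd d => ν {π : Setoid (Vd d) | π.r x 0})
      Filter.cofinite (nhds 0)) :
    (∀ Q : Measure (Setoid (Vd d) × (Vd d → Bool)), IsJointColor p ν Q →
      (MixingRER ν ↔ MixingJoint Q)) ∧
    (MixingRER ν → ∀ μ : Measure (Vd d → Bool), IsColorProcess p ν μ → MixingCfg μ) := by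
  have hp01 : p ∈ Set.Icc (0:ℝ) 1 := ⟨hp.1.le, hp.2.le⟩
  constructor
  · intro Q hQ
    obtain ⟨hQP, hQval⟩ := hQ
    haveI := hQP
    constructor
    · intro hmixR A B hA hB
      exact mixing_ext Q (fun x => shiftPair x) (fun x => measurable_shiftPair x)
        (fun x => Q_map_shift hstat hQval x) prod_eq_generateFrom_rectSets
        isPiSystem_rectSets (joint_base hp01 hstat hvan hmixR hQval) A B hA hB
    · intro hmixJ A B hA hB
      have h := hmixJ (A ×ˢ Set.univ) (B ×ˢ Set.univ)
        (hA.prod MeasurableSet.univ) (hB.prod MeasurableSet.univ)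
      rw [Q_prod_univ hQval A hA, Q_prod_univ hQval B hB] at h
      refine Filter.Tendsto.congr (fun x => ?_) h
      have hpre : shiftPair x ⁻¹' (B ×ˢ (Set.univ : Set (Vd d → Bool)))
          = (shiftSetoid x ⁻¹' B) ×ˢ (Set.univ : Set (Vd d → Bool)) := by
        rw [shiftPair_preimage_prod, Set.preimage_univ]
      rw [hpre, Set.prod_inter_prod, Set.univ_inter,
        Q_prod_univ hQval _ (hA.inter ((measurable_shiftSetoid x) hB))]
  · intro hmixR μ hμ
    obtain ⟨hμP, hμval⟩ := hμ
    haveI := hμP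
    intro A B hA hB
    exact mixing_ext μ (fun x => shiftCfg x) (fun x => measurable_shiftCfg x)
      (fun x => mu_map_shift hstat hμval x) pi_eq_generateFrom_cylSets
      isPiSystem_cylSets (cfg_base hp01 hstat hvan hmixR hμval) A B hA hB
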